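/- Let F be a formula with exactly n occurrences of quantifiers and let F' be its (unique) →-normal form. Then every maximal →ℐ-derivation starting from F (innermost rewriting) has length exactly n and ends in F'; moreover, n is the minimal length of a →-derivation from F to F', i.e., every sequence F = G₀ → G₁ → … → G_m = F' satisfies m ≥ n. -/

import Mathlib

mutual
  /-- Terms of first-order logic extended with Hilbert's ε-operator,
  in de Bruijn representation (so formulas are automatically identified up
  to renaming of bound variables). -/
  inductive Tm : Type
    | var : ℕ → Tm
    | fn : ℕ → (k : ℕ) → (Fin k → Tm) → Tm
    | eps : Fm → Tm
  /-- Formulas; `ex F`, `all F` and `Tm.eps F` bind de Bruijn index 0 of `F`. -/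
  inductive Fm : Type
    | pred : ℕ → (k : ℕ) → (Fin k → Tm) → Fm
    | not : Fm → Fm
    | or : Fm → Fm → Fm
    | and : Fm → Fm → Fm
    | imp : Fm → Fm → Fm
    | ex : Fm → Fm
    | all : Fm → Fm
end

/-- Lifting a renaming under a binder. -/
def upRen (r : ℕ → ℕ) : ℕ → ℕ
  | 0 => 0
  | n + 1 => r n + 1

mutual
  /-- Renaming of free variables in a term. -/
  def renT (r : ℕ → ℕ) : Tm → Tm
    | .var i => .var (r i)
    | .fn f k a => .fn f k (fun i => renT r (a i))
    | .eps F => .eps (renF (upRen r) F)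
  /-- Renaming of free variables in a formula. -/
  def renF (r : ℕ → ℕ) : Fm → Fm
    | .pred p k a => .pred p k (fun i => renT r (a i))
    | .not F => .not (renF r F)
    | .or F G => .or (renF r F) (renF r G)
    | .and F G => .and (renF r F) (renF r G)
    | .imp F G => .imp (renF r F) (renF r G)
    | .ex F => .ex (renF (upRen r) F)
    | .all F => .all (renF (upRen r) F)
end

/-- Lifting a substitution under a binder. -/
def upSub (σ : ℕ → Tm) : ℕ → Tm
  | 0 => .var 0
  | n + 1 => renT Nat.succ (σ n)

mutual
  /-- Capture-avoiding simultaneous substitution on terms. -/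
  def subT (σ : ℕ → Tm) : Tm → Tm
    | .var i => σ i
    | .fn f k a => .fn f k (fun i => subT σ (a i))
    | .eps F => .eps (subF (upSub σ) F)
  /-- Capture-avoiding simultaneous substitution on formulas. -/
  def subF (σ : ℕ → Tm) : Fm → Fm
    | .pred p k a => .pred p k (fun i => subT σ (a i))
    | .not F => .not (subF σ F)
    | .or F G => .or (subF σ F) (subF σ G)
    | .and F G => .and (subF σ F) (subF σ G)
    | .imp F G => .imp (subF σ F) (subF σ G)
    | .ex F => .ex (subF (upSub σ) F)
    | .all F => .all (subF (upSub σ) F)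
end

/-- `inst1 F t` is `F{x ↦ t}` for the variable `x` bound just outside `F`
(de Bruijn index 0). -/
def inst1 (F : Fm) (t : Tm) : Fm :=
  subF (fun n => match n with | 0 => t | n + 1 => .var n) F

mutual
  /-- The variable with de Bruijn index `n` occurs free in the term. -/
  def freeT (n : ℕ) : Tm → Prop
    | .var i => i = n
    | .fn _ _ a => ∃ i, freeT n (a i)
    | .eps F => freeF (n + 1) F
  /-- The variable with de Bruijn index `n` occurs free in the formula. -/
  def freeF (n : ℕ) : Fm → Prop
    | .pred _ _ a => ∃ i, freeT n (a i)
    | .not F => freeF n F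
    | .or F G => freeF n F ∨ freeF n G
    | .and F G => freeF n F ∨ freeF n G
    | .imp F G => freeF n F ∨ freeF n G
    | .ex F => freeF (n + 1) F
    | .all F => freeF (n + 1) F
end

mutual
  /-- Number of occurrences of quantifiers (∃ and ∀, but not ε) in a term. -/
  def qcT : Tm → ℕ
    | .var _ => 0
    | .fn _ _ a => ∑ i, qcT (a i)
    | .eps F => qcF F
  /-- Number of occurrences of quantifiers (∃ and ∀, but not ε) in a formula. -/
  def qcF : Fm → ℕ
    | .pred _ _ a => ∑ i, qcT (a i)
    | .not F => qcF F
    | .or F G => qcF F + qcF G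
    | .and F G => qcF F + qcF G
    | .imp F G => qcF F + qcF G
    | .ex F => qcF F + 1
    | .all F => qcF F + 1
end

/-- Quantifier symbols. -/
inductive Quant : Type
  | ex
  | all

/-- `mkQ Q A` is the quantified formula `Qx. A`. -/
def mkQ : Quant → Fm → Fm
  | .ex, A => .ex A
  | .all, A => .all A

/-- `negQ Q A` is `¬^Q A`: `¬A` for `Q = ∀` and `A` for `Q = ∃`. -/
def negQ : Quant → Fm → Fm
  | .ex, A => A
  | .all, A => .not A

/-- `qeRedex Q A` is `A{x ↦ εx. ¬^Q A}`, the contractum of the redex `Qx. A`. -/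
def qeRedex (Q : Quant) (A : Fm) : Fm := inst1 A (.eps (negQ Q A))

mutual
  /-- One rewrite step inside a term, where each rewritten quantified subformula
  `Qx. A` is required to satisfy the side condition `P A`. -/
  inductive StepT (P : Fm → Prop) : Tm → Tm → Prop
    | fn {f k} {a : Fin k → Tm} {j : Fin k} {t' : Tm} :
        StepT P (a j) t' → StepT P (.fn f k a) (.fn f k (Function.update a j t'))
    | eps {F F'} : StepF P F F' → StepT P (.eps F) (.eps F')
  /-- One rewrite step on formulas: replace one occurrence of a subformula
  `Qx. A` (with `P A`) by `A{x ↦ εx. ¬^Q A}`. -/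
  inductive StepF (P : Fm → Prop) : Fm → Fm → Prop
    | root {Q A} : P A → StepF P (mkQ Q A) (qeRedex Q A)
    | pred {p k} {a : Fin k → Tm} {j : Fin k} {t' : Tm} :
        StepT P (a j) t' → StepF P (.pred p k a) (.pred p k (Function.update a j t'))
    | not {F F'} : StepF P F F' → StepF P (.not F) (.not F')
    | orL {F F' G} : StepF P F F' → StepF P (.or F G) (.or F' G)
    | orR {F G G'} : StepF P G G' → StepF P (.or F G) (.or F G')
    | andL {F F' G} : StepF P F F' → StepF P (.and F G) (.and F' G)
    | andR {F G G'} : StepF P G G' → StepF P (.and F G) (.and F G')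
    | impL {F F' G} : StepF P F F' → StepF P (.imp F G) (.imp F' G)
    | impR {F G G'} : StepF P G G' → StepF P (.imp F G) (.imp F G')
    | ex {F F'} : StepF P F F' → StepF P (.ex F) (.ex F')
    | all {F F'} : StepF P F F' → StepF P (.all F) (.all F')
end

/-- The quantifier-elimination rewrite relation `→` on formulas. -/
def Step : Fm → Fm → Prop := StepF (fun _ => True)

/-- `→₀`: the steps rewriting a vacuous quantifier (bound variable not free in the body). -/
def Step0 : Fm → Fm → Prop := StepF (fun A => ¬ freeF 0 A)

/-- `→₁`: the steps rewriting a non-vacuous quantifier. -/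
def Step1 : Fm → Fm → Prop := StepF (fun A => freeF 0 A)

/-- `→ℐ`: the innermost steps, whose rewritten subformula `Qx. A` contains no
quantifier other than the outermost `Q`. -/
def StepI : Fm → Fm → Prop := StepF (fun A => qcF A = 0)

/-! Every `→ℐ`-step removes exactly one quantifier and every `→`-step at most one, since
substituting an ε-term never deletes quantifiers. A formula is `→`- or `→ℐ`-normal iff it is
quantifier-free (an innermost redex always exists), which gives the two counts. Normal forms are
unique because `nfF` eliminates all quantifiers bottom-up and commutes with substitution, hence is
invariant under `→`, and it fixes quantifier-free formulas. -/

theorem upRen_comp (r s : ℕ → ℕ) : upRen r ∘ upRen s = upRen (r ∘ s) := by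
  funext n; cases n <;> rfl

mutual
theorem renT_renT (r s : ℕ → ℕ) (t : Tm) : renT r (renT s t) = renT (r ∘ s) t := by
  cases t with
  | var i => rfl
  | fn f k a => simp only [renT]; exact congrArg _ (funext fun i => renT_renT r s (a i))
  | eps F => simp only [renT]; rw [renF_renF, upRen_comp]
theorem renF_renF (r s : ℕ → ℕ) (F : Fm) : renF r (renF s F) = renF (r ∘ s) F := by
  cases F with
  | pred p k a => simp only [renF]; exact congrArg _ (funext fun i => renT_renT r s (a i))
  | not F => simp only [renF, renF_renF r s F]
  | or F G | and F G | imp F G => simp only [renF, renF_renF r s F, renF_renF r s G]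
  | ex F | all F => simp only [renF, renF_renF (upRen r) (upRen s) F, upRen_comp]
end

theorem upSub_comp_upRen (σ : ℕ → Tm) (r : ℕ → ℕ) : upSub σ ∘ upRen r = upSub (σ ∘ r) := by
  funext n; cases n <;> rfl

mutual
theorem subT_renT (σ : ℕ → Tm) (r : ℕ → ℕ) (t : Tm) : subT σ (renT r t) = subT (σ ∘ r) t := by
  cases t with
  | var i => rfl
  | fn f k a => simp only [renT, subT]; exact congrArg _ (funext fun i => subT_renT σ r (a i))
  | eps F => simp only [renT, subT]; rw [subF_renF, upSub_comp_upRen]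
theorem subF_renF (σ : ℕ → Tm) (r : ℕ → ℕ) (F : Fm) : subF σ (renF r F) = subF (σ ∘ r) F := by
  cases F with
  | pred p k a => simp only [renF, subF]; exact congrArg _ (funext fun i => subT_renT σ r (a i))
  | not F => simp only [renF, subF, subF_renF σ r F]
  | or F G | and F G | imp F G => simp only [renF, subF, subF_renF σ r F, subF_renF σ r G]
  | ex F | all F => simp only [renF, subF, subF_renF (upSub σ) (upRen r) F, upSub_comp_upRen]
end

theorem renT_upRen_comp_upSub (r : ℕ → ℕ) (σ : ℕ → Tm) :
    renT (upRen r) ∘ upSub σ = upSub (renT r ∘ σ) := by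
  funext n; cases n with
  | zero => rfl
  | succ n =>
    show renT (upRen r) (renT Nat.succ (σ n)) = renT Nat.succ (renT r (σ n))
    rw [renT_renT, renT_renT]; rfl

mutual
theorem renT_subT (r : ℕ → ℕ) (σ : ℕ → Tm) (t : Tm) :
    renT r (subT σ t) = subT (renT r ∘ σ) t := by
  cases t with
  | var i => rfl
  | fn f k a => simp only [renT, subT]; exact congrArg _ (funext fun i => renT_subT r σ (a i))
  | eps F => simp only [renT, subT]; rw [renF_subF, renT_upRen_comp_upSub]
theorem renF_subF (r : ℕ → ℕ) (σ : ℕ → Tm) (F : Fm) :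
    renF r (subF σ F) = subF (renT r ∘ σ) F := by
  cases F with
  | pred p k a => simp only [renF, subF]; exact congrArg _ (funext fun i => renT_subT r σ (a i))
  | not F => simp only [renF, subF, renF_subF r σ F]
  | or F G | and F G | imp F G => simp only [renF, subF, renF_subF r σ F, renF_subF r σ G]
  | ex F | all F => simp only [renF, subF, renF_subF (upRen r) (upSub σ) F, renT_upRen_comp_upSub]
end

theorem subT_upSub_comp_upSub (σ τ : ℕ → Tm) :
    subT (upSub σ) ∘ upSub τ = upSub (subT σ ∘ τ) := by
  funext n; cases n with
  | zero => rfl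
  | succ n =>
    show subT (upSub σ) (renT Nat.succ (τ n)) = renT Nat.succ (subT σ (τ n))
    rw [subT_renT, renT_subT]
    rfl

mutual
theorem subT_subT (σ τ : ℕ → Tm) (t : Tm) : subT σ (subT τ t) = subT (subT σ ∘ τ) t := by
  cases t with
  | var i => rfl
  | fn f k a => simp only [subT]; exact congrArg _ (funext fun i => subT_subT σ τ (a i))
  | eps F => simp only [subT]; rw [subF_subF, subT_upSub_comp_upSub]
theorem subF_subF (σ τ : ℕ → Tm) (F : Fm) : subF σ (subF τ F) = subF (subT σ ∘ τ) F := by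
  cases F with
  | pred p k a => simp only [subF]; exact congrArg _ (funext fun i => subT_subT σ τ (a i))
  | not F => simp only [subF, subF_subF σ τ F]
  | or F G | and F G | imp F G => simp only [subF, subF_subF σ τ F, subF_subF σ τ G]
  | ex F | all F => simp only [subF, subF_subF (upSub σ) (upSub τ) F, subT_upSub_comp_upSub]
end

theorem upSub_var : upSub Tm.var = Tm.var := by
  funext n; cases n <;> rfl

mutual
theorem subT_var (t : Tm) : subT Tm.var t = t := by
  cases t with
  | var i => rfl
  | fn f k a => simp only [subT]; exact congrArg _ (funext fun i => subT_var (a i))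
  | eps F => simp only [subT, upSub_var, subF_var F]
theorem subF_var (F : Fm) : subF Tm.var F = F := by
  cases F with
  | pred p k a => simp only [subF]; exact congrArg _ (funext fun i => subT_var (a i))
  | not F => simp only [subF, subF_var F]
  | or F G | and F G | imp F G => simp only [subF, subF_var F, subF_var G]
  | ex F | all F => simp only [subF, upSub_var, subF_var F]
end

def cons1 (t : Tm) : ℕ → Tm
  | 0 => t
  | n + 1 => .var n

theorem inst1_eq_subF (F : Fm) (t : Tm) : inst1 F t = subF (cons1 t) F := rfl

theorem renF_inst1 (r : ℕ → ℕ) (F : Fm) (t : Tm) :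
    renF r (inst1 F t) = inst1 (renF (upRen r) F) (renT r t) := by
  rw [inst1_eq_subF, inst1_eq_subF, renF_subF, subF_renF]
  congr 1
  funext n; cases n <;> rfl

theorem subF_inst1 (σ : ℕ → Tm) (F : Fm) (t : Tm) :
    subF σ (inst1 F t) = inst1 (subF (upSub σ) F) (subT σ t) := by
  rw [inst1_eq_subF, inst1_eq_subF, subF_subF, subF_subF]
  congr 1
  funext n; cases n with
  | zero => rfl
  | succ n =>
    show σ n = subT (cons1 (subT σ t)) (renT Nat.succ (σ n))
    rw [subT_renT]
    exact (subT_var (σ n)).symm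

theorem renF_qeRedex (r : ℕ → ℕ) (Q : Quant) (A : Fm) :
    renF r (qeRedex Q A) = qeRedex Q (renF (upRen r) A) := by
  cases Q <;> exact renF_inst1 _ _ _

theorem subF_qeRedex (σ : ℕ → Tm) (Q : Quant) (A : Fm) :
    subF σ (qeRedex Q A) = qeRedex Q (subF (upSub σ) A) := by
  cases Q <;> exact subF_inst1 _ _ _

mutual
theorem qcT_renT (r : ℕ → ℕ) (t : Tm) : qcT (renT r t) = qcT t := by
  cases t with
  | var i => rfl
  | fn f k a => simp only [renT, qcT]; exact Finset.sum_congr rfl fun i _ => qcT_renT r (a i)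
  | eps F => simp only [renT, qcT]; exact qcF_renF (upRen r) F
theorem qcF_renF (r : ℕ → ℕ) (F : Fm) : qcF (renF r F) = qcF F := by
  cases F with
  | pred p k a => simp only [renF, qcF]; exact Finset.sum_congr rfl fun i _ => qcT_renT r (a i)
  | not F => simp only [renF, qcF, qcF_renF r F]
  | or F G | and F G | imp F G => simp only [renF, qcF, qcF_renF r F, qcF_renF r G]
  | ex F | all F => simp only [renF, qcF, qcF_renF (upRen r) F]
end

mutual
theorem qcT_le_qcT_subT (σ : ℕ → Tm) (t : Tm) : qcT t ≤ qcT (subT σ t) := by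
  cases t with
  | var i => exact Nat.zero_le _
  | fn f k a => exact Finset.sum_le_sum fun i _ => qcT_le_qcT_subT σ (a i)
  | eps F => exact qcF_le_qcF_subF (upSub σ) F
theorem qcF_le_qcF_subF (σ : ℕ → Tm) (F : Fm) : qcF F ≤ qcF (subF σ F) := by
  cases F with
  | pred p k a => exact Finset.sum_le_sum fun i _ => qcT_le_qcT_subT σ (a i)
  | not F => exact qcF_le_qcF_subF σ F
  | or F G | and F G | imp F G => exact Nat.add_le_add (qcF_le_qcF_subF σ F) (qcF_le_qcF_subF σ G)
  | ex F | all F => exact Nat.add_le_add_right (qcF_le_qcF_subF (upSub σ) F) 1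
end

theorem qcT_upSub_eq_zero {σ : ℕ → Tm} (h : ∀ i, qcT (σ i) = 0) (i : ℕ) :
    qcT (upSub σ i) = 0 := by
  cases i with
  | zero => rfl
  | succ n => exact (qcT_renT Nat.succ (σ n)).trans (h n)

mutual
theorem qcT_subT_of_qcT_eq_zero {σ : ℕ → Tm} (h : ∀ i, qcT (σ i) = 0) (t : Tm) :
    qcT (subT σ t) = qcT t := by
  cases t with
  | var i => exact h i
  | fn f k a =>
    simp only [subT, qcT]; exact Finset.sum_congr rfl fun i _ => qcT_subT_of_qcT_eq_zero h (a i)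
  | eps F => exact qcF_subF_of_qcT_eq_zero (qcT_upSub_eq_zero h) F
theorem qcF_subF_of_qcT_eq_zero {σ : ℕ → Tm} (h : ∀ i, qcT (σ i) = 0) (F : Fm) :
    qcF (subF σ F) = qcF F := by
  cases F with
  | pred p k a =>
    simp only [subF, qcF]; exact Finset.sum_congr rfl fun i _ => qcT_subT_of_qcT_eq_zero h (a i)
  | not F => exact qcF_subF_of_qcT_eq_zero h F
  | or F G | and F G | imp F G =>
    simp only [subF, qcF, qcF_subF_of_qcT_eq_zero h F, qcF_subF_of_qcT_eq_zero h G]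
  | ex F | all F => simp only [subF, qcF, qcF_subF_of_qcT_eq_zero (qcT_upSub_eq_zero h) F]
end

theorem qcF_mkQ (Q : Quant) (A : Fm) : qcF (mkQ Q A) = qcF A + 1 := by cases Q <;> rfl

theorem qcF_le_qcF_qeRedex (Q : Quant) (A : Fm) : qcF A ≤ qcF (qeRedex Q A) :=
  qcF_le_qcF_subF _ A

theorem qcF_qeRedex_of_qcF_eq_zero {A : Fm} (h : qcF A = 0) (Q : Quant) :
    qcF (qeRedex Q A) = 0 := by
  refine (qcF_subF_of_qcT_eq_zero (fun i => ?_) A).trans h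
  cases i with
  | zero => cases Q <;> exact h
  | succ n => rfl

theorem Fintype.sum_apply_update_add {ι α M : Type*} [Fintype ι] [DecidableEq ι]
    [AddCommMonoid M] (φ : α → M) (a : ι → α) (j : ι) (x : α) :
    ∑ i, φ (Function.update a j x i) + φ (a j) = ∑ i, φ (a i) + φ x := by
  rw [← Finset.add_sum_erase _ _ (Finset.mem_univ j),
    ← Finset.add_sum_erase _ _ (Finset.mem_univ j),
    Function.update_self, Finset.sum_congr rfl fun i hi =>
      congrArg φ (Function.update_of_ne (Finset.ne_of_mem_erase hi) x a)]
  abel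

mutual
theorem StepT.qcT_le_succ {P : Fm → Prop} {t t' : Tm} (h : StepT P t t') : qcT t ≤ qcT t' + 1 := by
  cases h with
  | @fn f k a j u h =>
    have := h.qcT_le_succ
    have := Fintype.sum_apply_update_add qcT a j u
    simp only [qcT]; omega
  | eps h => exact h.qcF_le_succ
theorem StepF.qcF_le_succ {P : Fm → Prop} {F F' : Fm} (h : StepF P F F') : qcF F ≤ qcF F' + 1 := by
  cases h with
  | @root Q A _ => rw [qcF_mkQ]; exact Nat.add_le_add_right (qcF_le_qcF_qeRedex Q A) 1
  | @pred p k a j u h =>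
    have := h.qcT_le_succ
    have := Fintype.sum_apply_update_add qcT a j u
    simp only [qcF]; omega
  | not h | orL h | andL h | impL h | orR h | andR h | impR h | ex h | all h =>
    have := h.qcF_le_succ; simp only [qcF]; omega
end

mutual
theorem StepT.mono {P P' : Fm → Prop} (hP : ∀ A, P A → P' A) {t t' : Tm}
    (h : StepT P t t') : StepT P' t t' := by
  cases h with
  | fn h => exact .fn (h.mono hP)
  | eps h => exact .eps (h.mono hP)
theorem StepF.mono {P P' : Fm → Prop} (hP : ∀ A, P A → P' A) {F F' : Fm}
    (h : StepF P F F') : StepF P' F F' := by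
  cases h with
  | root hA => exact .root (hP _ hA)
  | pred h => exact .pred (h.mono hP)
  | not h => exact .not (h.mono hP)
  | orL h => exact .orL (h.mono hP)
  | orR h => exact .orR (h.mono hP)
  | andL h => exact .andL (h.mono hP)
  | andR h => exact .andR (h.mono hP)
  | impL h => exact .impL (h.mono hP)
  | impR h => exact .impR (h.mono hP)
  | ex h => exact .ex (h.mono hP)
  | all h => exact .all (h.mono hP)
end

theorem StepI.toStep {F F' : Fm} (h : StepI F F') : Step F F' :=
  StepF.mono (fun _ _ => trivial) h

mutual
theorem StepT.qcT_eq_succ_of_innermost {t t' : Tm} (h : StepT (fun A => qcF A = 0) t t') :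
    qcT t = qcT t' + 1 := by
  cases h with
  | @fn f k a j u h =>
    have := h.qcT_eq_succ_of_innermost
    have := Fintype.sum_apply_update_add qcT a j u
    simp only [qcT]; omega
  | eps h => exact StepI.qcF_eq_succ h
theorem StepI.qcF_eq_succ {F F' : Fm} (h : StepI F F') : qcF F = qcF F' + 1 := by
  cases h with
  | @root Q A hA => rw [qcF_mkQ, hA, qcF_qeRedex_of_qcF_eq_zero hA]
  | @pred p k a j u h =>
    have := h.qcT_eq_succ_of_innermost
    have := Fintype.sum_apply_update_add qcT a j u
    simp only [qcF]; omega
  | not h | orL h | andL h | impL h | orR h | andR h | impR h | ex h | all h =>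
    have := StepI.qcF_eq_succ h; simp only [qcF]; omega
end

mutual
theorem exists_innermost_stepT {t : Tm} (h : qcT t ≠ 0) :
    ∃ t', StepT (fun A => qcF A = 0) t t' := by
  cases t with
  | var i => exact absurd rfl h
  | fn f k a =>
    obtain ⟨j, -, hj⟩ := Finset.exists_ne_zero_of_sum_ne_zero h
    obtain ⟨t', ht'⟩ := exists_innermost_stepT hj
    exact ⟨_, .fn ht'⟩
  | eps F =>
    obtain ⟨F', hF'⟩ := exists_stepI h
    exact ⟨_, .eps hF'⟩
theorem exists_stepI {F : Fm} (h : qcF F ≠ 0) : ∃ F', StepI F F' := by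
  cases F with
  | pred p k a =>
    obtain ⟨j, -, hj⟩ := Finset.exists_ne_zero_of_sum_ne_zero h
    obtain ⟨t', ht'⟩ := exists_innermost_stepT hj
    exact ⟨_, .pred ht'⟩
  | not F => obtain ⟨F', h'⟩ := exists_stepI (F := F) h; exact ⟨_, .not h'⟩
  | or F G | and F G | imp F G =>
    by_cases hF : qcF F = 0
    · obtain ⟨G', h'⟩ := exists_stepI (F := G) (by simp_all [qcF])
      first | exact ⟨_, .orR h'⟩ | exact ⟨_, .andR h'⟩ | exact ⟨_, .impR h'⟩
    · obtain ⟨F', h'⟩ := exists_stepI hF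
      first | exact ⟨_, .orL h'⟩ | exact ⟨_, .andL h'⟩ | exact ⟨_, .impL h'⟩
  | ex A | all A =>
    by_cases hA : qcF A = 0
    · first | exact ⟨_, .root (Q := .ex) hA⟩ | exact ⟨_, .root (Q := .all) hA⟩
    · obtain ⟨A', h'⟩ := exists_stepI hA
      first | exact ⟨_, .ex h'⟩ | exact ⟨_, .all h'⟩
end

theorem qcF_eq_zero_of_forall_not_stepF {P : Fm → Prop} (hP : ∀ A, qcF A = 0 → P A) {F : Fm}
    (h : ∀ G, ¬ StepF P F G) : qcF F = 0 := by
  by_contra hF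
  obtain ⟨G, hG⟩ := exists_stepI hF
  exact h G (StepF.mono hP hG)

mutual
def nfT : Tm → Tm
  | .var i => .var i
  | .fn f k a => .fn f k (fun i => nfT (a i))
  | .eps F => .eps (nfF F)
/-- The `→`-normal form, computed by eliminating quantifiers innermost first. -/
def nfF : Fm → Fm
  | .pred p k a => .pred p k (fun i => nfT (a i))
  | .not F => .not (nfF F)
  | .or F G => .or (nfF F) (nfF G)
  | .and F G => .and (nfF F) (nfF G)
  | .imp F G => .imp (nfF F) (nfF G)
  | .ex A => qeRedex .ex (nfF A)
  | .all A => qeRedex .all (nfF A)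
end

theorem nfF_mkQ (Q : Quant) (A : Fm) : nfF (mkQ Q A) = qeRedex Q (nfF A) := by
  cases Q <;> rfl

mutual
theorem nfT_renT (r : ℕ → ℕ) (t : Tm) : nfT (renT r t) = renT r (nfT t) := by
  cases t with
  | var i => rfl
  | fn f k a => simp only [renT, nfT]; exact congrArg _ (funext fun i => nfT_renT r (a i))
  | eps F => simp only [renT, nfT, nfF_renF (upRen r) F]
theorem nfF_renF (r : ℕ → ℕ) (F : Fm) : nfF (renF r F) = renF r (nfF F) := by
  cases F with
  | pred p k a => simp only [renF, nfF]; exact congrArg _ (funext fun i => nfT_renT r (a i))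
  | not F => simp only [renF, nfF, nfF_renF r F]
  | or F G | and F G | imp F G => simp only [renF, nfF, nfF_renF r F, nfF_renF r G]
  | ex A | all A => simp only [renF, nfF, nfF_renF (upRen r) A, renF_qeRedex]
end

theorem nfT_comp_upSub (σ : ℕ → Tm) : nfT ∘ upSub σ = upSub (nfT ∘ σ) := by
  funext n; cases n with
  | zero => rfl
  | succ n => exact nfT_renT Nat.succ (σ n)

mutual
theorem nfT_subT (σ : ℕ → Tm) (t : Tm) : nfT (subT σ t) = subT (nfT ∘ σ) (nfT t) := by
  cases t with
  | var i => rfl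
  | fn f k a => simp only [subT, nfT]; exact congrArg _ (funext fun i => nfT_subT σ (a i))
  | eps F => simp only [subT, nfT, nfF_subF (upSub σ) F, nfT_comp_upSub]
theorem nfF_subF (σ : ℕ → Tm) (F : Fm) : nfF (subF σ F) = subF (nfT ∘ σ) (nfF F) := by
  cases F with
  | pred p k a => simp only [subF, nfF]; exact congrArg _ (funext fun i => nfT_subT σ (a i))
  | not F => simp only [subF, nfF, nfF_subF σ F]
  | or F G | and F G | imp F G => simp only [subF, nfF, nfF_subF σ F, nfF_subF σ G]
  | ex A | all A => simp only [subF, nfF, nfF_subF (upSub σ) A, nfT_comp_upSub, subF_qeRedex]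
end

theorem nfF_qeRedex (Q : Quant) (A : Fm) : nfF (qeRedex Q A) = qeRedex Q (nfF A) := by
  have hσ : nfT ∘ cons1 (.eps (negQ Q A)) = cons1 (.eps (negQ Q (nfF A))) := by
    funext n; cases n with
    | zero => cases Q <;> rfl
    | succ n => rfl
  rw [qeRedex, inst1_eq_subF, nfF_subF, hσ]
  rfl

mutual
theorem StepT.nfT_eq {P : Fm → Prop} {t t' : Tm} (h : StepT P t t') : nfT t = nfT t' := by
  cases h with
  | @fn f k a j u h =>
    simp only [nfT]
    congr 1
    funext i
    rw [Function.apply_update (fun _ => nfT), ← h.nfT_eq, Function.update_eq_self]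
  | eps h => simp only [nfT, h.nfF_eq]
theorem StepF.nfF_eq {P : Fm → Prop} {F F' : Fm} (h : StepF P F F') : nfF F = nfF F' := by
  cases h with
  | @root Q A _ => rw [nfF_mkQ, nfF_qeRedex]
  | @pred p k a j u h =>
    simp only [nfF]
    congr 1
    funext i
    rw [Function.apply_update (fun _ => nfT), ← h.nfT_eq, Function.update_eq_self]
  | not h | orL h | andL h | impL h | orR h | andR h | impR h | ex h | all h =>
    simp only [nfF, h.nfF_eq]
end

theorem nfF_eq_of_reflTransGen {F G : Fm} (h : Relation.ReflTransGen Step F G) :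
    nfF F = nfF G := by
  induction h with
  | refl => rfl
  | tail _ hstep ih => exact ih.trans (StepF.nfF_eq hstep)

mutual
theorem nfT_of_qcT_eq_zero {t : Tm} (h : qcT t = 0) : nfT t = t := by
  cases t with
  | var i => rfl
  | fn f k a =>
    simp only [qcT, Finset.sum_eq_zero_iff, Finset.mem_univ, true_implies] at h
    simp only [nfT]; exact congrArg _ (funext fun i => nfT_of_qcT_eq_zero (h i))
  | eps F => simp only [nfT, nfF_of_qcF_eq_zero (F := F) h]
theorem nfF_of_qcF_eq_zero {F : Fm} (h : qcF F = 0) : nfF F = F := by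
  cases F with
  | pred p k a =>
    simp only [qcF, Finset.sum_eq_zero_iff, Finset.mem_univ, true_implies] at h
    simp only [nfF]; exact congrArg _ (funext fun i => nfT_of_qcT_eq_zero (h i))
  | not F => simp only [nfF, nfF_of_qcF_eq_zero (F := F) h]
  | or F G | and F G | imp F G =>
    simp only [qcF, Nat.add_eq_zero_iff] at h
    simp only [nfF, nfF_of_qcF_eq_zero h.1, nfF_of_qcF_eq_zero h.2]
  | ex A | all A => simp [qcF] at h
end

theorem reflTransGen_of_forall_lt {α : Type*} {r : α → α → Prop} {g : ℕ → α} {m : ℕ}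
    (h : ∀ i < m, r (g i) (g (i + 1))) : Relation.ReflTransGen r (g 0) (g m) :=
  Relation.ReflTransGen.lift g (fun _ _ => id) _ _
    (reflTransGen_of_succ_of_le (fun i j => r (g i) (g j)) (fun i hi => h i hi.2) m.zero_le)

theorem le_add_of_forall_lt_le_succ {φ : ℕ → ℕ} {m : ℕ} (h : ∀ i < m, φ i ≤ φ (i + 1) + 1) :
    φ 0 ≤ φ m + m := by
  induction m with
  | zero => rfl
  | succ m ih =>
    have := ih fun i hi => h i (by omega)
    have := h m (by omega)
    omega

theorem eq_add_of_forall_lt_eq_succ {φ : ℕ → ℕ} {m : ℕ} (h : ∀ i < m, φ i = φ (i + 1) + 1) :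
    φ 0 = φ m + m := by
  induction m with
  | zero => rfl
  | succ m ih =>
    have := ih fun i hi => h i (by omega)
    have := h m (by omega)
    omega

/-- for a formula `F` with `n` quantifier occurrences and
(unique) `→`-normal form `F'`, every maximal innermost (`→ℐ`) derivation from
`F` has length exactly `n` and ends in `F'`; and every `→`-derivation from `F`
to `F'` has length at least `n`. -/
theorem stmt15 (F F' : Fm) (n : ℕ) (hn : qcF F = n)
    (hnf₁ : Relation.ReflTransGen Step F F') (hnf₂ : ∀ G : Fm, ¬ Step F' G) :
    (∀ (m : ℕ) (g : ℕ → Fm), g 0 = F → (∀ i < m, StepI (g i) (g (i + 1))) →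
      (∀ G : Fm, ¬ StepI (g m) G) → m = n ∧ g m = F') ∧
    (∀ (m : ℕ) (g : ℕ → Fm), g 0 = F → (∀ i < m, Step (g i) (g (i + 1))) →
      g m = F' → n ≤ m) := by
  have hF' : qcF F' = 0 := qcF_eq_zero_of_forall_not_stepF (fun _ _ => trivial) hnf₂
  refine ⟨fun m g hg0 hsteps hmax => ?_, fun m g hg0 hsteps hgm => ?_⟩
  · have hgm : qcF (g m) = 0 := qcF_eq_zero_of_forall_not_stepF (fun _ => id) hmax
    have hcount : qcF (g 0) = qcF (g m) + m :=
      eq_add_of_forall_lt_eq_succ fun i hi => (hsteps i hi).qcF_eq_succ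
    have hred : Relation.ReflTransGen Step F (g m) :=
      hg0 ▸ reflTransGen_of_forall_lt fun i hi => (hsteps i hi).toStep
    rw [hg0, hn, hgm] at hcount
    refine ⟨by omega, ?_⟩
    rw [← nfF_of_qcF_eq_zero hgm, ← nfF_of_qcF_eq_zero hF', ← nfF_eq_of_reflTransGen hred,
      nfF_eq_of_reflTransGen hnf₁]
  · have hcount : qcF (g 0) ≤ qcF (g m) + m :=
      le_add_of_forall_lt_le_succ fun i hi => StepF.qcF_le_succ (hsteps i hi)
    rw [hg0, hn, hgm, hF'] at hcount
    omega
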